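/- arXiv:2508.20897 — 2 statements merged into one kernel-verified Lean document; each statement's English description precedes it below -/
import Mathlib

section
/- Let Q_i (i = 1,…,m) be symmetric n×n matrices and suppose there exist γ₁,…,γ_m ≥ 0 with Σ γᵢ Qᵢ positive definite. Then the set {(x, X) : (1/2)trace(QᵢX) + cᵢᵀx ≤ bᵢ for all i, X ⪰ x xᵀ} has bounded projection onto the x-coordinates. In particular, each coordinate function x ↦ x_j attains finite infimum and supremum over this set. -/
/-!
Aggregate the constraints with the weights `γ` into a single constraint with matrix
`A = ∑ γᵢ Qᵢ`. As `A` and `X - x xᵀ` are both positive semidefinite, `trace (A (X - x xᵀ)) ≥ 0`,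
i.e. `xᵀ A x ≤ trace (A X)`, so every feasible `x` satisfies `½ xᵀ A x + dᵀ x ≤ β`. A positive
definite `A` is coercive (`xᵀ A x ≥ α ‖x‖²` with `α` the minimum of the form on the unit sphere),
so the quadratic term dominates the linear one and this sublevel set is bounded.
-/

open Matrix

variable {ι : Type*} [Fintype ι]

open scoped ComplexOrder in
theorem Matrix.PosSemidef.trace_mul_nonneg {𝕜 : Type*} [RCLike 𝕜] {A S : Matrix ι ι 𝕜}
    (hA : A.PosSemidef) (hS : S.PosSemidef) : 0 ≤ (A * S).trace := by
  classical
  open scoped MatrixOrder in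
  obtain ⟨B, rfl⟩ := CStarAlgebra.nonneg_iff_eq_star_mul_self.mp hA.nonneg
  rw [mul_assoc, trace_mul_comm]
  exact (hS.mul_mul_conjTranspose_same B).trace_nonneg

theorem Matrix.PosSemidef.dotProduct_mulVec_le_trace_mul {A X : Matrix ι ι ℝ} {x : ι → ℝ}
    (hA : A.PosSemidef) (hX : (X - vecMulVec x x).PosSemidef) :
    x ⬝ᵥ A *ᵥ x ≤ (A * X).trace := by
  have h := hA.trace_mul_nonneg hX
  rwa [mul_sub, trace_sub, mul_vecMulVec, trace_vecMulVec, dotProduct_comm, sub_nonneg] at h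

theorem Matrix.PosDef.exists_pos_mul_norm_sq_le {A : Matrix ι ι ℝ} (hA : A.PosDef) :
    ∃ α > 0, ∀ x : ι → ℝ, α * ‖x‖ ^ 2 ≤ x ⬝ᵥ A *ᵥ x := by
  have hcont : Continuous fun x : ι → ℝ => x ⬝ᵥ A *ᵥ x := by fun_prop
  obtain ⟨α, hα, hmin⟩ := (isCompact_sphere (0 : ι → ℝ) 1).exists_forall_le' hcont.continuousOn
    (a := 0) fun y hy => by
      simpa using hA.re_dotProduct_pos (x := y) (by rintro rfl; simp at hy)
  refine ⟨α, hα, fun x => ?_⟩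
  rcases eq_or_ne x 0 with rfl | hx
  · simp
  have hnorm : 0 < ‖x‖ := norm_pos_iff.mpr hx
  have h := hmin (‖x‖⁻¹ • x) (by simp [norm_smul, hnorm.ne'])
  rw [mulVec_smul, dotProduct_smul, smul_dotProduct, smul_eq_mul, smul_eq_mul] at h
  calc α * ‖x‖ ^ 2 ≤ ‖x‖⁻¹ * (‖x‖⁻¹ * (x ⬝ᵥ A *ᵥ x)) * ‖x‖ ^ 2 := by gcongr
    _ = x ⬝ᵥ A *ᵥ x := by field_simp

theorem abs_dotProduct_le_sum_abs_mul_norm (d x : ι → ℝ) : |d ⬝ᵥ x| ≤ (∑ i, |d i|) * ‖x‖ := by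
  rw [Finset.sum_mul]
  refine (Finset.abs_sum_le_sum_abs _ _).trans (Finset.sum_le_sum fun i _ => ?_)
  rw [abs_mul]
  exact mul_le_mul_of_nonneg_left (norm_le_pi_norm x i) (abs_nonneg _)

theorem le_max_one_of_mul_sq_le {α K D t : ℝ} (hα : 0 < α) (h : α * t ^ 2 ≤ K + D * t) :
    t ≤ max 1 ((|K| + |D|) / α) := by
  rcases le_or_gt t 1 with ht | ht
  · exact le_max_of_le_left ht
  refine le_max_of_le_right ((le_div_iff₀ hα).mpr ?_)
  nlinarith [le_abs_self K, le_abs_self D, abs_nonneg K, abs_nonneg D]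

theorem Matrix.PosDef.exists_norm_le_of_half_quadratic_le {A : Matrix ι ι ℝ} (hA : A.PosDef)
    (d : ι → ℝ) (β : ℝ) :
    ∃ R, ∀ x : ι → ℝ, (1 / 2) * (x ⬝ᵥ A *ᵥ x) + d ⬝ᵥ x ≤ β → ‖x‖ ≤ R := by
  obtain ⟨α, hα, hcoercive⟩ := hA.exists_pos_mul_norm_sq_le
  refine ⟨_, fun x hx => le_max_one_of_mul_sq_le (K := 2 * β) (D := 2 * ∑ i, |d i|) hα ?_⟩
  have := hcoercive x
  have := neg_abs_le (d ⬝ᵥ x)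
  have := abs_dotProduct_le_sum_abs_mul_norm d x
  linarith

variable {κ : Type*} [Fintype κ]

def SDPRelaxationFeasible (Q : κ → Matrix ι ι ℝ) (c : κ → ι → ℝ) (b : κ → ℝ) (x : ι → ℝ)
    (X : Matrix ι ι ℝ) : Prop :=
  (∀ i, (1 / 2) * (Q i * X).trace + c i ⬝ᵥ x ≤ b i) ∧ (X - vecMulVec x x).PosSemidef

theorem sum_smul_constraints_le {Q : κ → Matrix ι ι ℝ} {c : κ → ι → ℝ} {b : κ → ℝ}
    {x : ι → ℝ} {X : Matrix ι ι ℝ} (hcon : ∀ i, (1 / 2) * (Q i * X).trace + c i ⬝ᵥ x ≤ b i)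
    {γ : κ → ℝ} (hγ : ∀ i, 0 ≤ γ i) :
    (1 / 2) * ((∑ i, γ i • Q i) * X).trace + (∑ i, γ i • c i) ⬝ᵥ x ≤ ∑ i, γ i * b i := by
  calc (1 / 2) * ((∑ i, γ i • Q i) * X).trace + (∑ i, γ i • c i) ⬝ᵥ x
      = ∑ i, γ i * ((1 / 2) * (Q i * X).trace + c i ⬝ᵥ x) := by
        simp only [Finset.sum_mul, trace_sum, smul_mul, trace_smul, sum_dotProduct,
          smul_dotProduct, smul_eq_mul, Finset.mul_sum, ← Finset.sum_add_distrib]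
        congr 1; ext i; ring
    _ ≤ ∑ i, γ i * b i := Finset.sum_le_sum fun i _ => mul_le_mul_of_nonneg_left (hcon i) (hγ i)

theorem exists_norm_le_of_sdpRelaxationFeasible (Q : κ → Matrix ι ι ℝ) (c : κ → ι → ℝ)
    (b : κ → ℝ) {γ : κ → ℝ} (hγ : ∀ i, 0 ≤ γ i) (hpd : (∑ i, γ i • Q i).PosDef) :
    ∃ R, ∀ x X, SDPRelaxationFeasible Q c b x X → ‖x‖ ≤ R := by
  obtain ⟨R, hR⟩ := hpd.exists_norm_le_of_half_quadratic_le (∑ i, γ i • c i) (∑ i, γ i * b i)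
  refine ⟨R, fun x X ⟨hcon, hpsd⟩ => hR x ?_⟩
  have := hpd.posSemidef.dotProduct_mulVec_le_trace_mul hpsd
  linarith [sum_smul_constraints_le hcon hγ]

theorem sdp_relaxation_bounded_projection_general {n m : ℕ}
    (Q : Fin m → Matrix (Fin n) (Fin n) ℝ)
    (c : Fin m → Fin n → ℝ) (b : Fin m → ℝ)
    (γ : Fin m → ℝ) (hγ : ∀ i, 0 ≤ γ i)
    (hpd : (∑ i, γ i • Q i).PosDef) :
    (∃ M : ℝ, ∀ (x : Fin n → ℝ) (X : Matrix (Fin n) (Fin n) ℝ),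
      (∀ i, (1 / 2) * (Q i * X).trace + c i ⬝ᵥ x ≤ b i) →
      (X - Matrix.vecMulVec x x).PosSemidef →
      ∀ j, |x j| ≤ M) ∧
    ∀ j : Fin n,
      BddBelow ((fun p : (Fin n → ℝ) × Matrix (Fin n) (Fin n) ℝ => p.1 j) ''
        {p | (∀ i, (1 / 2) * (Q i * p.2).trace + c i ⬝ᵥ p.1 ≤ b i) ∧
          (p.2 - Matrix.vecMulVec p.1 p.1).PosSemidef}) ∧
      BddAbove ((fun p : (Fin n → ℝ) × Matrix (Fin n) (Fin n) ℝ => p.1 j) ''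
        {p | (∀ i, (1 / 2) * (Q i * p.2).trace + c i ⬝ᵥ p.1 ≤ b i) ∧
          (p.2 - Matrix.vecMulVec p.1 p.1).PosSemidef}) := by
  obtain ⟨R, hR⟩ := exists_norm_le_of_sdpRelaxationFeasible Q c b hγ hpd
  have hcoord : ∀ x X, SDPRelaxationFeasible Q c b x X → ∀ j, |x j| ≤ R := fun x X hfeas j =>
    (norm_le_pi_norm x j).trans (hR x X hfeas)
  refine ⟨⟨R, fun x X hcon hpsd => hcoord x X ⟨hcon, hpsd⟩⟩, fun j => ⟨⟨-R, ?_⟩, ⟨R, ?_⟩⟩⟩ <;>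
    rintro _ ⟨p, hfeas, rfl⟩
  · exact (abs_le.mp (hcoord p.1 p.2 hfeas j)).1
  · exact (abs_le.mp (hcoord p.1 p.2 hfeas j)).2

/-- If some nonnegative combination of the constraint matrices is positive
definite, the SDP relaxation feasible set has bounded projection onto the
`x`-coordinates; in particular each coordinate function has finite infimum and
supremum over this set. -/
theorem sdp_relaxation_bounded_projection {n m : ℕ}
    (Q : Fin m → Matrix (Fin n) (Fin n) ℝ) (hQsym : ∀ i, (Q i).IsSymm)
    (c : Fin m → Fin n → ℝ) (b : Fin m → ℝ)
    (γ : Fin m → ℝ) (hγ : ∀ i, 0 ≤ γ i)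
    (hpd : (∑ i, γ i • Q i).PosDef) :
    (∃ M : ℝ, ∀ (x : Fin n → ℝ) (X : Matrix (Fin n) (Fin n) ℝ),
      (∀ i, (1 / 2) * (Q i * X).trace + c i ⬝ᵥ x ≤ b i) →
      (X - Matrix.vecMulVec x x).PosSemidef →
      ∀ j, |x j| ≤ M) ∧
    ∀ j : Fin n,
      BddBelow ((fun p : (Fin n → ℝ) × Matrix (Fin n) (Fin n) ℝ => p.1 j) ''
        {p | (∀ i, (1 / 2) * (Q i * p.2).trace + c i ⬝ᵥ p.1 ≤ b i) ∧
          (p.2 - Matrix.vecMulVec p.1 p.1).PosSemidef}) ∧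
      BddAbove ((fun p : (Fin n → ℝ) × Matrix (Fin n) (Fin n) ℝ => p.1 j) ''
        {p | (∀ i, (1 / 2) * (Q i * p.2).trace + c i ⬝ᵥ p.1 ≤ b i) ∧
          (p.2 - Matrix.vecMulVec p.1 p.1).PosSemidef}) :=
  sdp_relaxation_bounded_projection_general Q c b γ hγ hpd
end

section
/- Suppose a₁ ∈ ℝⁿ is nonzero and d₁ ∈ ℝ. Then there is no pair (x, X) with X − x xᵀ positive definite satisfying trace((a₁a₁ᵀ)X) − 2d₁a₁ᵀx + d₁² = 0. In other words, the constraint (a₁a₁ᵀ)·X − 2d₁ a₁ᵀx + d₁² = 0 together with X ≻ x xᵀ is infeasible. -/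
open Matrix

theorem Matrix.trace_vecMulVec_mul {n R : Type*} [Fintype n] [CommSemiring R] (a b : n → R)
    (X : Matrix n n R) : (vecMulVec a b * X).trace = b ⬝ᵥ X *ᵥ a := by
  rw [vecMulVec_mul, trace_vecMulVec, dotProduct_mulVec, dotProduct_comm]

theorem Matrix.trace_vecMulVec_mul_sub_add_sq {n R : Type*} [Fintype n] [CommRing R]
    (a x : n → R) (X : Matrix n n R) (d : R) :
    (vecMulVec a a * X).trace - 2 * d * (a ⬝ᵥ x) + d ^ 2 =
      a ⬝ᵥ (X - vecMulVec x x) *ᵥ a + (a ⬝ᵥ x - d) ^ 2 := by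
  rw [trace_vecMulVec_mul, sub_mulVec, dotProduct_sub, vecMulVec_mulVec, op_smul_eq_smul,
    dotProduct_smul, smul_eq_mul, dotProduct_comm x a]
  ring

/-- The squared-equality cut together with `X ≻ x xᵀ` is infeasible: the
SDP+RLT relaxation with the squared linear equality constraints has no strictly
feasible point. -/
theorem no_strictly_feasible_point {n : ℕ} (a : Fin n → ℝ) (ha : a ≠ 0)
    (d : ℝ) :
    ¬ ∃ (x : Fin n → ℝ) (X : Matrix (Fin n) (Fin n) ℝ),
      (X - Matrix.vecMulVec x x).PosDef ∧
      (Matrix.vecMulVec a a * X).trace - 2 * d * (a ⬝ᵥ x) + d ^ 2 = 0 := by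
  rintro ⟨x, X, hpd, hcut⟩
  have hform : 0 < a ⬝ᵥ (X - vecMulVec x x) *ᵥ a := by
    simpa only [star_trivial] using hpd.dotProduct_mulVec_pos ha
  rw [trace_vecMulVec_mul_sub_add_sq] at hcut
  linarith [sq_nonneg (a ⬝ᵥ x - d)]
end
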